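/- Suppose $\mathscr{A} \subseteq \mathbb{N}$ satisfies $\int_0^1 |g(\beta)|^p d\beta \ll N^{p-1}$ for some $p \in [1,2)$, where $g(\beta) = \sum_{n \in \mathscr{A}\cap[1,N]} e(n\beta)$. Let $k \ge 2$, $\boldsymbol{\alpha} \in \mathbb{R}^{k+1}$, $\psi(x;\boldsymbol{\alpha}) = \alpha_k x^k + \dots + \alpha_1 x + \alpha_0$, and $G(\beta) = \sum_{1 \le n \le N} e(\psi(n;\boldsymbol{\alpha}) + \beta n)$. Then $|\sum_{n \in \mathscr{A}\cap[1,N]} e(\psi(n;\boldsymbol{\alpha}))| \ll N^{1 - 1/p}\,(N^{p-1})^{1/p}\, (\sup_{\beta \in [0,1)} |G(\beta)|)^{2/p - 1} = N\, (N^{-1}\sup_{\beta} |G(\beta)|)^{2/p-1}$. -/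

import Mathlib

open Complex Finset MeasureTheory
open scoped Real Classical

/-- `e x = exp(2πix)` -/
noncomputable def e (x : ℝ) : ℂ := Complex.exp (2 * Real.pi * Complex.I * x)

/-- The elements of `A` in `[1, N]`, as a finset. -/
noncomputable def AN (A : Set ℕ) (N : ℝ) : Finset ℕ :=
  (Finset.Icc 1 ⌊N⌋₊).filter (· ∈ A)

/-- The mean value `I_p(N; A)`. -/
noncomputable def Ip (p : ℝ) (A : Set ℕ) (N : ℝ) : ℝ :=
  ∫ α in (0:ℝ)..(1:ℝ), ‖∑ n ∈ AN A N, e (n * α)‖ ^ p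

/-- The polynomial `ψ(x; α) = α_k x^k + ⋯ + α_1 x + α_0`. -/
noncomputable def poly {k : ℕ} (a : Fin (k + 1) → ℝ) (x : ℝ) : ℝ :=
  ∑ i, a i * x ^ (i : ℕ)

lemma e_norm (x : ℝ) : ‖e x‖ = 1 := by
  simp [e, Complex.norm_exp]

lemma e_abs (x : ℝ) : ‖e x‖ = 1 := by
  exact e_norm x

lemma e_add (x y : ℝ) : e (x + y) = e x * e y := by
  rw [e, e, e, ← Complex.exp_add]; push_cast; ring_nf

lemma e_conj (x : ℝ) : starRingEnd ℂ (e x) = e (-x) := by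
  rw [e, e, ← Complex.exp_conj]
  congr 1
  rw [map_mul, map_mul, map_mul, Complex.conj_I, Complex.conj_ofReal, Complex.conj_ofReal,
    map_ofNat]
  push_cast
  ring

lemma e_int (n : ℤ) : e (n : ℝ) = 1 := by
  rw [e, show (2 * Real.pi * Complex.I * ((n:ℝ):ℂ)) = (n:ℤ) * (2 * Real.pi * Complex.I) by push_cast; ring,
    Complex.exp_int_mul_two_pi_mul_I]

lemma e_int_add (x : ℝ) (n : ℤ) : e (x + n) = e x := by
  rw [e_add, e_int, mul_one]

lemma continuous_e_comp {f : ℝ → ℝ} (hf : Continuous f) : Continuous fun x => e (f x) :=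
  Complex.continuous_exp.comp (continuous_const.mul (Complex.continuous_ofReal.comp hf))

lemma orth (j : ℤ) : (∫ β in (0:ℝ)..1, Complex.exp (2 * Real.pi * Complex.I * j * β)) =
    if j = 0 then 1 else 0 := by
  split_ifs with h
  · simp [h]
  · have hc : (2 * Real.pi * Complex.I * j : ℂ) ≠ 0 := by
      simp [Real.pi_ne_zero, Complex.I_ne_zero, h]
    rw [integral_exp_mul_complex hc]
    have h1 : Complex.exp (2 * Real.pi * Complex.I * j) = 1 := by
      have := e_int j
      rw [e, show ((j:ℝ):ℂ) = (j:ℂ) by norm_cast] at this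
      exact this
    push_cast
    rw [mul_one, mul_zero, h1, Complex.exp_zero]
    simp

lemma key (s t : Finset ℕ) (c d : ℕ → ℂ) :
    (∫ β in (0:ℝ)..1, (∑ n ∈ s, c n * e (n * β)) * (starRingEnd ℂ) (∑ m ∈ t, d m * e (m * β)))
    = ∑ n ∈ s ∩ t, c n * (starRingEnd ℂ) (d n) := by
  have h1 : ∀ β : ℝ, (∑ n ∈ s, c n * e (n * β)) * (starRingEnd ℂ) (∑ m ∈ t, d m * e (m * β))
      = ∑ n ∈ s, ∑ m ∈ t, (c n * (starRingEnd ℂ) (d m)) *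
          Complex.exp (2 * Real.pi * Complex.I * (((n:ℤ) - (m:ℤ) : ℤ) : ℂ) * β) := by
    intro β
    rw [map_sum, Finset.sum_mul_sum]
    refine Finset.sum_congr rfl fun n _ => Finset.sum_congr rfl fun m _ => ?_
    rw [map_mul, e_conj]
    have : e ((n:ℝ) * β) * e (-((m:ℝ) * β)) =
        Complex.exp (2 * Real.pi * Complex.I * (((n:ℤ) - (m:ℤ) : ℤ) : ℂ) * β) := by
      rw [e, e, ← Complex.exp_add]
      congr 1
      push_cast
      ring
    rw [← this]
    ring
  simp only [h1]
  have hcont : ∀ (z : ℂ) (j : ℤ), Continuous fun β : ℝ =>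
      z * Complex.exp (2 * Real.pi * Complex.I * (j : ℂ) * β) := by
    intro z j
    exact continuous_const.mul (Complex.continuous_exp.comp (by continuity))
  rw [intervalIntegral.integral_finset_sum]
  swap
  · exact fun n _ => (continuous_finset_sum t fun m _ => hcont _ _).intervalIntegrable 0 1
  have h2 : ∀ n ∈ s, (∫ β in (0:ℝ)..1, ∑ m ∈ t, (c n * (starRingEnd ℂ) (d m)) *
      Complex.exp (2 * Real.pi * Complex.I * (((n:ℤ) - (m:ℤ) : ℤ) : ℂ) * β))
      = ∑ m ∈ t, if (n:ℤ) - (m:ℤ) = 0 then c n * (starRingEnd ℂ) (d m) else 0 := by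
    intro n _
    rw [intervalIntegral.integral_finset_sum (fun m _ => (hcont _ _).intervalIntegrable 0 1)]
    refine Finset.sum_congr rfl fun m _ => ?_
    rw [intervalIntegral.integral_const_mul, orth]
    split_ifs <;> simp
  rw [Finset.sum_congr rfl h2]
  have h3 : ∀ n ∈ s, (∑ m ∈ t, if (n:ℤ) - (m:ℤ) = 0 then c n * (starRingEnd ℂ) (d m) else 0)
      = if n ∈ t then c n * (starRingEnd ℂ) (d n) else 0 := by
    intro n _
    rw [← Finset.sum_ite_eq' t n (fun m => c n * (starRingEnd ℂ) (d m))]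
    refine Finset.sum_congr rfl fun m _ => ?_
    congr 1
    simp [sub_eq_zero, eq_comm]
  rw [Finset.sum_congr rfl h3, ← Finset.sum_filter]
  congr 1

/-- Hölder/Parseval bound for Weyl sums over subconvex sets:
`|∑_{n ∈ A(N)} e(ψ(n))| ≪ N^{1-1/p} (N^{p-1})^{1/p} (sup_β |G(β)|)^{2/p-1}`. -/
theorem stmt_18 (p : ℝ) (hp1 : 1 ≤ p) (hp2 : p < 2) (C₀ : ℝ) :
    ∃ C : ℝ, ∀ (A : Set ℕ) (N : ℝ), 1 ≤ N →
      Ip p A N ≤ C₀ * N ^ (p - 1) →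
      ∀ (k : ℕ), 2 ≤ k → ∀ a : Fin (k + 1) → ℝ,
        ‖∑ n ∈ AN A N, e (poly a n)‖ ≤
          C * N ^ (1 - 1/p) * (N ^ (p - 1)) ^ (1/p) *
            (⨆ β : Set.Ico (0:ℝ) 1,
              ‖∑ n ∈ Finset.Icc 1 ⌊N⌋₊, e (poly a n + (β : ℝ) * n)‖) ^ (2/p - 1) := by
  have hp0 : 0 < p := by linarith
  refine ⟨(|C₀| + 1) ^ (1/p), fun A N hN hIp k hk a => ?_⟩
  set C : ℝ := (|C₀| + 1) ^ (1/p) with hC_def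
  set M : ℕ := ⌊N⌋₊ with hM_def
  set G : ℝ → ℂ := fun β => ∑ n ∈ Finset.Icc 1 M, e (poly a n + β * n) with hG_def
  set g : ℝ → ℂ := fun β => ∑ m ∈ AN A N, e (m * β) with hg_def
  set S : ℝ := ⨆ β : Set.Ico (0:ℝ) 1, ‖G β‖ with hS_def
  have hN0 : (0:ℝ) < N := by linarith
  have hMN : (M : ℝ) ≤ N := Nat.floor_le (by linarith)
  -- basic exponent facts
  have he1 : (0:ℝ) ≤ 2/p - 1 := by
    rw [le_sub_iff_add_le, zero_add, le_div_iff₀ hp0]; linarith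
  have he2 : (0:ℝ) ≤ 2 - 2/p := by
    have : 2/p ≤ 2 := by
      rw [div_le_iff₀ hp0]; nlinarith
    linarith
  -- continuity
  have hGc : Continuous G := continuous_finset_sum _ fun n _ =>
    continuous_e_comp (by continuity)
  have hgc : Continuous g := continuous_finset_sum _ fun m _ =>
    continuous_e_comp (by continuity)
  have hrGc : Continuous fun β => ‖G β‖ ^ (2 - 2/p) :=
    hGc.norm.rpow_const fun x => Or.inr he2
  -- norm bounds
  have hGnorm : ∀ β : ℝ, ‖G β‖ ≤ M := by
    intro β
    calc ‖G β‖ ≤ ∑ n ∈ Finset.Icc 1 M, ‖e (poly a n + β * n)‖ := norm_sum_le _ _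
      _ = ∑ n ∈ Finset.Icc 1 M, 1 := by simp [e_norm, e_abs]
      _ ≤ M := by simp [Nat.card_Icc]
  -- sup bound
  have hBdd : BddAbove (Set.range fun β : Set.Ico (0:ℝ) 1 => ‖G β‖) := by
    refine ⟨M, ?_⟩
    rintro _ ⟨β, rfl⟩
    exact hGnorm β
  have hS : ∀ β ∈ Set.Icc (0:ℝ) 1, ‖G β‖ ≤ S := by
    intro β hβ
    rcases lt_or_eq_of_le hβ.2 with h | h
    · exact le_ciSup hBdd (⟨β, hβ.1, h⟩ : Set.Ico (0:ℝ) 1)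
    · have hG10 : G β = G 0 := by
        refine Finset.sum_congr rfl fun n _ => ?_
        rw [h]
        have : poly a n + (1:ℝ) * n = (poly a n + (0:ℝ) * n) + (n : ℤ) := by push_cast; ring
        rw [this, e_int_add]
      rw [hG10]
      exact le_ciSup hBdd (⟨0, le_refl _, one_pos⟩ : Set.Ico (0:ℝ) 1)
  have hS0 : 0 ≤ S := le_trans (norm_nonneg (G 0)) (hS 0 (by norm_num))
  -- expansion of G
  have hG_eq : ∀ β : ℝ, G β = ∑ n ∈ Finset.Icc 1 M, e (poly a n) * e (n * β) := by
    intro β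
    refine Finset.sum_congr rfl fun n _ => ?_
    rw [show poly a n + β * n = poly a n + n * β by ring, e_add]
  -- orthogonality identity for T
  have hT : (∑ n ∈ AN A N, e (poly a n)) = ∫ β in (0:ℝ)..1, G β * (starRingEnd ℂ) (g β) := by
    have h := key (Finset.Icc 1 M) (AN A N) (fun n => e (poly a n)) (fun _ => 1)
    have hsub : Finset.Icc 1 M ∩ AN A N = AN A N := by
      apply Finset.inter_eq_right.mpr
      intro x hx
      exact (Finset.mem_filter.mp hx).1
    rw [hsub] at h
    simp only [map_one, mul_one] at h
    rw [← h]
    refine intervalIntegral.integral_congr fun β _ => ?_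
    rw [hG_eq β]
    congr 1
    · congr 1
      refine Finset.sum_congr rfl fun m _ => ?_
      rw [one_mul]
  -- Parseval
  have hParC : (∫ β in (0:ℝ)..1, G β * (starRingEnd ℂ) (G β)) = (M : ℂ) := by
    have h := key (Finset.Icc 1 M) (Finset.Icc 1 M) (fun n => e (poly a n)) (fun n => e (poly a n))
    rw [Finset.inter_self] at h
    have h2 : ∀ n ∈ Finset.Icc 1 M, e (poly a n) * (starRingEnd ℂ) (e (poly a n)) = 1 := by
      intro n _
      rw [e_conj, ← e_add]
      simp [e]
    rw [Finset.sum_congr rfl h2] at h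
    simp only [Finset.sum_const, nsmul_eq_mul, mul_one, Nat.card_Icc] at h
    have hM1 : M + 1 - 1 = M := by omega
    rw [hM1] at h
    rw [← h]
    refine intervalIntegral.integral_congr fun β _ => ?_
    rw [hG_eq β]
  have hGint : IntegrableOn (fun β => G β * (starRingEnd ℂ) (G β)) (Set.Ioc (0:ℝ) 1) volume :=
    (hGc.mul (continuous_star.comp hGc)).integrableOn_Ioc
  have hPar : (∫ β in Set.Ioc (0:ℝ) 1, ‖G β‖ ^ (2:ℝ)) = (M : ℝ) := by
    have hpt : ∀ β : ℝ, ‖G β‖ ^ (2:ℝ) = (G β * (starRingEnd ℂ) (G β)).re := by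
      intro β
      have h2 : ‖G β‖ ^ (2:ℝ) = ‖G β‖ ^ (2:ℕ) := by
        rw [← Real.rpow_natCast]; norm_num
      rw [h2, Complex.mul_conj, Complex.ofReal_re, Complex.normSq_eq_norm_sq]
    calc (∫ β in Set.Ioc (0:ℝ) 1, ‖G β‖ ^ (2:ℝ))
        = ∫ β in Set.Ioc (0:ℝ) 1, (G β * (starRingEnd ℂ) (G β)).re := by
          exact integral_congr_ae (Filter.Eventually.of_forall fun β => hpt β)
      _ = (∫ β in Set.Ioc (0:ℝ) 1, G β * (starRingEnd ℂ) (G β)).re := integral_re hGint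
      _ = (M : ℝ) := by
          rw [← intervalIntegral.integral_of_le zero_le_one, hParC]
          simp
  -- Step 1
  have step1 : ‖∑ n ∈ AN A N, e (poly a n)‖ ≤ ∫ β in (0:ℝ)..1, ‖G β‖ * ‖g β‖ := by
    rw [hT]
    calc ‖∫ β in (0:ℝ)..1, G β * (starRingEnd ℂ) (g β)‖
        ≤ ∫ β in (0:ℝ)..1, ‖G β * (starRingEnd ℂ) (g β)‖ :=
          intervalIntegral.norm_integral_le_integral_norm zero_le_one
      _ = ∫ β in (0:ℝ)..1, ‖G β‖ * ‖g β‖ := by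
          refine intervalIntegral.integral_congr fun β _ => ?_
          rw [norm_mul, RCLike.norm_conj]
  -- Step 2
  have step2 : (∫ β in (0:ℝ)..1, ‖G β‖ * ‖g β‖) ≤
      S ^ (2/p - 1) * ∫ β in (0:ℝ)..1, ‖G β‖ ^ (2 - 2/p) * ‖g β‖ := by
    rw [← intervalIntegral.integral_const_mul]
    refine intervalIntegral.integral_mono_on zero_le_one
      ((hGc.norm.mul hgc.norm).intervalIntegrable 0 1)
      ((continuous_const.mul (hrGc.mul hgc.norm)).intervalIntegrable 0 1) ?_
    intro β hβ
    have hGS := hS β hβ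
    have hsum : (2/p - 1) + (2 - 2/p) = 1 := by ring
    calc ‖G β‖ * ‖g β‖ = (‖G β‖ ^ ((2/p - 1) + (2 - 2/p))) * ‖g β‖ := by
          rw [hsum, Real.rpow_one]
      _ = (‖G β‖ ^ (2/p - 1) * ‖G β‖ ^ (2 - 2/p)) * ‖g β‖ := by
          rw [Real.rpow_add' (norm_nonneg _) (by rw [hsum]; norm_num)]
      _ ≤ (S ^ (2/p - 1) * ‖G β‖ ^ (2 - 2/p)) * ‖g β‖ := by
          have h1 : ‖G β‖ ^ (2/p - 1) ≤ S ^ (2/p - 1) :=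
            Real.rpow_le_rpow (norm_nonneg _) hGS he1
          exact mul_le_mul_of_nonneg_right
            (mul_le_mul_of_nonneg_right h1 (Real.rpow_nonneg (norm_nonneg _) _))
            (norm_nonneg _)
      _ = S ^ (2/p - 1) * (‖G β‖ ^ (2 - 2/p) * ‖g β‖) := by ring
  -- Step 3
  have hIpnn : 0 ≤ Ip p A N :=
    intervalIntegral.integral_nonneg zero_le_one
      (fun x _ => Real.rpow_nonneg (norm_nonneg _) _)
  have hNp : (0:ℝ) < N ^ (p - 1) := Real.rpow_pos_of_pos hN0 _
  have hC₀ : 0 ≤ C₀ := by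
    by_contra hneg
    push_neg at hneg
    nlinarith
  have step3 : (∫ β in (0:ℝ)..1, ‖G β‖ ^ (2 - 2/p) * ‖g β‖) ≤
      N ^ (1 - 1/p) * (C₀ * N ^ (p - 1)) ^ (1/p) := by
    rcases eq_or_lt_of_le hp1 with hp | hp
    · -- p = 1
      rw [← hp] at hIp ⊢
      have e0 : (2:ℝ) - 2/1 = 0 := by norm_num
      have e1' : (1:ℝ) - 1/1 = 0 := by norm_num
      have e2 : (1:ℝ)/1 = 1 := by norm_num
      have e3 : (1:ℝ) - 1 = 0 := by norm_num
      rw [e0, e1', e2, e3, Real.rpow_zero, Real.rpow_one, one_mul]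
      rw [e3] at hIp
      have heq : (∫ β in (0:ℝ)..1, ‖G β‖ ^ (0:ℝ) * ‖g β‖) = Ip 1 A N := by
        rw [Ip]
        refine intervalIntegral.integral_congr fun β _ => ?_
        rw [Real.rpow_zero, one_mul, Real.rpow_one]
      rw [heq]
      rw [Real.rpow_zero] at hIp
      exact hIp
    · -- p > 1
      have hp1' : (0:ℝ) < p - 1 := by linarith
      set q : ℝ := p / (p - 1) with hq_def
      have hpq : q.HolderConjugate p := by
        exact ((Real.holderConjugate_iff_eq_conjExponent hp).mpr hq_def).symm
      haveI : IsFiniteMeasure (volume.restrict (Set.Ioc (0:ℝ) 1)) := by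
        constructor
        rw [Measure.restrict_apply_univ]
        simp [Real.volume_Ioc]
      have hmf : MemLp (fun β => ‖G β‖ ^ (2 - 2/p)) (ENNReal.ofReal q)
          (volume.restrict (Set.Ioc (0:ℝ) 1)) := by
        refine MemLp.of_bound (hrGc.aestronglyMeasurable.restrict) ((M:ℝ) ^ (2 - 2/p)) ?_
        refine Filter.Eventually.of_forall fun β => ?_
        rw [Real.norm_of_nonneg (Real.rpow_nonneg (norm_nonneg _) _)]
        exact Real.rpow_le_rpow (norm_nonneg _) (hGnorm β) he2
      have hmg : MemLp (fun β => ‖g β‖) (ENNReal.ofReal p)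
          (volume.restrict (Set.Ioc (0:ℝ) 1)) := by
        refine MemLp.of_bound (hgc.norm.aestronglyMeasurable.restrict) ((AN A N).card : ℝ) ?_
        refine Filter.Eventually.of_forall fun β => ?_
        rw [Real.norm_of_nonneg (norm_nonneg _)]
        calc ‖g β‖ ≤ ∑ m ∈ AN A N, ‖e (m * β)‖ := norm_sum_le _ _
          _ = ((AN A N).card : ℝ) := by simp [e_norm, e_abs]
      have hHolder := integral_mul_le_Lp_mul_Lq_of_nonneg hpq
        (Filter.Eventually.of_forall fun β => Real.rpow_nonneg (norm_nonneg (G β)) _)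
        (Filter.Eventually.of_forall fun β => norm_nonneg (g β)) hmf hmg
      have hqexp : ∀ β : ℝ, (‖G β‖ ^ (2 - 2/p)) ^ q = ‖G β‖ ^ (2:ℝ) := by
        intro β
        rw [← Real.rpow_mul (norm_nonneg _)]
        congr 1
        rw [hq_def]
        field_simp
      have hIp_eq : (∫ β in Set.Ioc (0:ℝ) 1, ‖g β‖ ^ p) = Ip p A N := by
        rw [Ip, intervalIntegral.integral_of_le zero_le_one]
      have hq_inv : 1/q = 1 - 1/p := by
        rw [hq_def]
        field_simp
      have hq_inv_nn : 0 ≤ 1/q := by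
        rw [hq_inv]
        have h1p : 1/p ≤ 1 := by rw [div_le_one hp0]; linarith
        linarith
      rw [intervalIntegral.integral_of_le zero_le_one]
      calc (∫ β in Set.Ioc (0:ℝ) 1, ‖G β‖ ^ (2 - 2/p) * ‖g β‖)
          ≤ (∫ β in Set.Ioc (0:ℝ) 1, (‖G β‖ ^ (2 - 2/p)) ^ q) ^ (1/q) *
            (∫ β in Set.Ioc (0:ℝ) 1, ‖g β‖ ^ p) ^ (1/p) := hHolder
        _ = ((M:ℝ)) ^ (1/q) * (Ip p A N) ^ (1/p) := by
            rw [hIp_eq]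
            congr 2
            rw [← hPar]
            exact integral_congr_ae (Filter.Eventually.of_forall fun β => hqexp β)
        _ ≤ N ^ (1/q) * (C₀ * N ^ (p - 1)) ^ (1/p) := by
            refine mul_le_mul (Real.rpow_le_rpow (Nat.cast_nonneg _) hMN hq_inv_nn)
              (Real.rpow_le_rpow hIpnn hIp (by positivity))
              (Real.rpow_nonneg hIpnn _) (Real.rpow_nonneg (le_of_lt hN0) _)
        _ = N ^ (1 - 1/p) * (C₀ * N ^ (p - 1)) ^ (1/p) := by rw [hq_inv]
  -- final assembly
  have hfinal := step1.trans (step2.trans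
    (mul_le_mul_of_nonneg_left step3 (Real.rpow_nonneg hS0 _)))
  have hsplit : (C₀ * N ^ (p-1)) ^ (1/p) = C₀ ^ (1/p) * (N ^ (p-1)) ^ (1/p) :=
    Real.mul_rpow hC₀ (le_of_lt hNp)
  have hCle : C₀ ^ (1/p) ≤ C := by
    rw [hC_def]
    refine Real.rpow_le_rpow hC₀ ?_ (by positivity)
    have := le_abs_self C₀
    linarith
  have hX : (0:ℝ) ≤ N ^ (1 - 1/p) * ((N ^ (p-1)) ^ (1/p) * S ^ (2/p - 1)) :=
    mul_nonneg (Real.rpow_nonneg (le_of_lt hN0) _)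
      (mul_nonneg (Real.rpow_nonneg (le_of_lt hNp) _) (Real.rpow_nonneg hS0 _))
  calc ‖∑ n ∈ AN A N, e (poly a n)‖
      ≤ S ^ (2/p - 1) * (N ^ (1 - 1/p) * (C₀ ^ (1/p) * (N ^ (p-1)) ^ (1/p))) := by
        rw [← hsplit]; exact hfinal
    _ = C₀ ^ (1/p) * (N ^ (1 - 1/p) * ((N ^ (p-1)) ^ (1/p) * S ^ (2/p - 1))) := by ring
    _ ≤ C * (N ^ (1 - 1/p) * ((N ^ (p-1)) ^ (1/p) * S ^ (2/p - 1))) :=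
        mul_le_mul_of_nonneg_right hCle hX
    _ = C * N ^ (1 - 1/p) * (N ^ (p-1)) ^ (1/p) * S ^ (2/p - 1) := by ring
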